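/- Let G be a finite set of monomials, no one dividing another, such that every element of G is dominant with respect to G. Then for any two distinct subsets L₁ ≠ L₂ of G, lcm(L₁) ≠ lcm(L₂); in particular the number of distinct values of lcm over subsets of G is exactly 2^|G|. -/

import Mathlib

open Finset

variable {X : Type*} [DecidableEq X]

/-- The lcm of a finite set of monomials (monomials = finitely supported
exponent functions): pointwise maximum of exponents. -/
noncomputable def mlcm (L : Finset (X →₀ ℕ)) : X →₀ ℕ := L.sup id

/-- `m` is dominant with respect to `G`: some variable `x` appears in `m`
with exponent at least `k > 0` while every other element of `G` has
`x`-exponent `< k`. -/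
def Dominant (G : Finset (X →₀ ℕ)) (m : X →₀ ℕ) : Prop :=
  ∃ x : X, ∃ k : ℕ, 0 < k ∧ k ≤ m x ∧ ∀ m' ∈ G, m' ≠ m → m' x < k

/-- Total degree of a monomial: sum of its exponents. -/
def mdeg (m : X →₀ ℕ) : ℕ := m.sum fun _ e => e

/-! A dominant generator `m ∈ G` divides `lcm L` for `L ⊆ G` exactly when `m ∈ L`: otherwise
every element of `L` has exponent `< k` at the dominant variable of `m`, hence so does `lcm L`.
So `L = {m ∈ G | m ∣ lcm L}` is recovered from its lcm. -/

section

variable {σ : Type*}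

theorem mlcm_apply (L : Finset (σ →₀ ℕ)) (x : σ) : mlcm L x = L.sup (· x) :=
  apply_sup_eq_sup_comp (fun f : σ →₀ ℕ => f x) (fun f g => Finsupp.sup_apply f g x) rfl

theorem le_mlcm {L : Finset (σ →₀ ℕ)} {m : σ →₀ ℕ} (hm : m ∈ L) : m ≤ mlcm L :=
  le_sup (f := id) hm

theorem Dominant.le_mlcm_iff {G L : Finset (σ →₀ ℕ)} {m : σ →₀ ℕ} (hdom : Dominant G m)
    (hL : L ⊆ G) : m ≤ mlcm L ↔ m ∈ L := by
  refine ⟨fun hle => ?_, le_mlcm⟩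
  by_contra hm
  obtain ⟨x, k, hk, hkm, hlt⟩ := hdom
  have hlcm : mlcm L x < k := by
    rw [mlcm_apply]
    exact (Finset.sup_lt_iff hk).2 fun m' hm' => hlt m' (hL hm') (ne_of_mem_of_not_mem hm' hm)
  exact (hkm.trans (hle x)).not_gt hlcm

theorem mlcm_injOn_powerset {G : Finset (σ →₀ ℕ)} (hdom : ∀ m ∈ G, Dominant G m) :
    Set.InjOn mlcm (G.powerset : Set (Finset (σ →₀ ℕ))) := by
  intro L₁ h₁ L₂ h₂ heq
  have h₁ : L₁ ⊆ G := mem_powerset.1 h₁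
  have h₂ : L₂ ⊆ G := mem_powerset.1 h₂
  ext m
  by_cases hm : m ∈ G
  · rw [← (hdom m hm).le_mlcm_iff h₁, ← (hdom m hm).le_mlcm_iff h₂, heq]
  · exact iff_of_false (fun h => hm (h₁ h)) (fun h => hm (h₂ h))

end

theorem lcm_lattice_boolean_general (G : Finset (X →₀ ℕ))
    (hdom : ∀ m ∈ G, Dominant G m) :
    (∀ L₁ ⊆ G, ∀ L₂ ⊆ G, L₁ ≠ L₂ → mlcm L₁ ≠ mlcm L₂) ∧
    (G.powerset.image mlcm).card = 2 ^ G.card := by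
  have hinj := mlcm_injOn_powerset hdom
  refine ⟨fun L₁ h₁ L₂ h₂ hne heq => hne (hinj (mem_powerset.2 h₁) (mem_powerset.2 h₂) heq), ?_⟩
  rw [card_image_of_injOn hinj, card_powerset]

theorem lcm_lattice_boolean (G : Finset (X →₀ ℕ))
    (hmin : ∀ a ∈ G, ∀ b ∈ G, a ≠ b → ¬ a ≤ b)
    (hdom : ∀ m ∈ G, Dominant G m) :
    (∀ L₁ ⊆ G, ∀ L₂ ⊆ G, L₁ ≠ L₂ → mlcm L₁ ≠ mlcm L₂) ∧
    (G.powerset.image mlcm).card = 2 ^ G.card :=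
  lcm_lattice_boolean_general G hdom
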